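/- Let X be an alphabet having n ≥ 2 letters, let g: X* → X* be a primitive looping morphism, and let x ∈ X be a letter such that g^ω(x) exists. Then there exists a primitive word u ∈ X* such that g^ω(x) = u^ω. -/

import Mathlib

open Filter Set

variable {X : Type*}

/-- Apply the morphism with letter images `g` to a word. -/
def applyM (g : X → List X) (w : List X) : List X := w.flatMap g

/-- `iterM g k w` is `g^k(w)`. -/
def iterM (g : X → List X) (k : ℕ) (w : List X) : List X := (applyM g)^[k] w

/-- The letter map of the composition `g ∘ h` (first `h`, then `g`). -/
def compM (g h : X → List X) : X → List X := fun a => applyM g (h a)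

/-- The letter map of the power `g^k`. -/
def powM (g : X → List X) (k : ℕ) : X → List X := fun a => iterM g k [a]

/-- A morphism is primitive if some power maps every letter to a word containing every letter. -/
def Primitive (g : X → List X) : Prop := ∃ k : ℕ, 0 < k ∧ ∀ a b : X, a ∈ iterM g k [b]

/-- `Mg g` is the maximal length of the image of a letter. -/
def Mg [Fintype X] (g : X → List X) : ℕ := Finset.univ.sup fun x => (g x).length

/-- A morphism is growing if the lengths of iterated images of every letter tend to infinity. -/
def Growing (g : X → List X) : Prop :=
  ∀ x : X, Tendsto (fun i => (iterM g i [x]).length) atTop atTop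

/-- `w` is a (finite) prefix of the infinite word `s`. -/
def IsPrefI (w : List X) (s : ℕ → X) : Prop := ∀ i (h : i < w.length), w[i]'h = s i

/-- `v` is a factor of the infinite word `s`. -/
def IsFactorI (v : List X) (s : ℕ → X) : Prop :=
  ∃ j : ℕ, ∀ i (h : i < v.length), v[i]'h = s (j + i)

/-- `g^ω(x)` exists. -/
def OmegaExists (g : X → List X) (x : X) : Prop :=
  [x] <+: g x ∧ Tendsto (fun i => (iterM g i [x]).length) atTop atTop

/-- `s = g^ω(x)`. -/
def IsOmega (g : X → List X) (x : X) (s : ℕ → X) : Prop :=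
  OmegaExists g x ∧ ∀ i : ℕ, IsPrefI (iterM g i [x]) s

/-- `s = u^ω` for the nonempty word `u`. -/
def IsPeriodicWord (s : ℕ → X) (u : List X) : Prop :=
  u ≠ [] ∧ ∀ (i : ℕ) (h : i % u.length < u.length), s i = u[i % u.length]'h

/-- A morphism is looping. -/
def Looping (g : X → List X) : Prop :=
  ∃ k : ℕ, 0 < k ∧ ∃ x : X, ∃ u : List X, ∃ s : ℕ → X,
    IsOmega (powM g k) x s ∧ IsPeriodicWord s u

/-- A morphism is loop-free if it is not looping. -/
def LoopFree (g : X → List X) : Prop := ¬ Looping g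

/-- `p` is a period of `u`. -/
def HasPeriod (u : List X) (p : ℕ) : Prop :=
  0 < p ∧ ∀ i : ℕ, i + p < u.length → u[i + p]? = u[i]?

/-- The smallest period of `u`. -/
noncomputable def PER (u : List X) : ℕ := sInf {p | HasPeriod u p}

/-- A primitive word: nonempty and not a proper power of a shorter word. -/
def PrimitiveWord (u : List X) : Prop :=
  u ≠ [] ∧ ¬∃ (v : List X) (j : ℕ), 2 ≤ j ∧ v.length < u.length ∧
    u = (List.replicate j v).flatten

/-- `COMP g h` : the set of words whose images under `g` and `h` are prefix-comparable. -/
def COMP (g h : X → List X) : Set (List X) :=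
  {w | ∃ u₁ u₂ : List X, applyM g w ++ u₁ = applyM h w ++ u₂}

/-- `BAL g h`. -/
noncomputable def BAL (g h : X → List X) : ℕ∞ :=
  ⨆ (x : X) (k : ℕ),
    ((((applyM g (iterM g k [x])).length : ℤ) -
      ((applyM h (iterM g k [x])).length : ℤ)).natAbs : ℕ∞)

/-- The set of factors of length `q` of the word `w`. -/
def Fq (q : ℕ) (w : List X) : Set (List X) := {v | v.length = q ∧ v <:+: w}

/-- The set of factors of length `q` of words of `L`. -/
def FqL (q : ℕ) (L : Set (List X)) : Set (List X) := ⋃ w ∈ L, Fq q w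

/-- `A n = ⌊9 n³ √(n log n)⌋`. -/
noncomputable def Abound (n : ℕ) : ℕ := ⌊9 * (n : ℝ)^3 * Real.sqrt (n * Real.log n)⌋₊

/-!
Let `(g^k)^ω(y) = v^ω` witness that `g` is looping. By primitivity of `g^k`, the letter `x` occurs
in some `g^(kK)(y)`, so every `g^(km)(x)` is a factor of `v^ω` and hence has period `|v|`. These
words are prefixes of `g^ω(x)` of unbounded length, so `g^ω(x)` has period `|v|`; its shortest
period then gives a primitive root.
-/

lemma applyM_append (g : X → List X) (u v : List X) :
    applyM g (u ++ v) = applyM g u ++ applyM g v := by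
  simp [applyM]

lemma iterM_succ (g : X → List X) (m : ℕ) (w : List X) :
    iterM g (m + 1) w = applyM g (iterM g m w) :=
  Function.iterate_succ_apply' _ _ _

lemma iterM_append (g : X → List X) (m : ℕ) (u v : List X) :
    iterM g m (u ++ v) = iterM g m u ++ iterM g m v := by
  induction m with
  | zero => rfl
  | succ m ih => rw [iterM_succ, iterM_succ, iterM_succ, ih, applyM_append]

lemma iterM_add (g : X → List X) (a b : ℕ) (w : List X) :
    iterM g (a + b) w = iterM g a (iterM g b w) :=
  Function.iterate_add_apply _ _ _ _

lemma applyM_powM (g : X → List X) (k : ℕ) (w : List X) :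
    applyM (powM g k) w = iterM g k w := by
  induction w with
  | nil => exact (Function.iterate_fixed rfl k).symm
  | cons a t ih =>
    rw [← List.singleton_append, applyM_append, iterM_append, ih]
    simp [applyM, powM]

lemma iterM_powM (g : X → List X) (k m : ℕ) (w : List X) :
    iterM (powM g k) m w = iterM g (k * m) w := by
  induction m with
  | zero => rfl
  | succ m ih =>
    rw [iterM_succ, ih, applyM_powM, ← iterM_add, Nat.mul_succ, Nat.add_comm]

lemma mem_iterM_add {g : X → List X} {a b c : X} {K m : ℕ} (ha : a ∈ iterM g K [c])
    (hc : c ∈ iterM g m [b]) : a ∈ iterM g (K + m) [b] := by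
  rw [iterM_add, ← applyM_powM, applyM, List.mem_flatMap]
  exact ⟨c, hc, ha⟩

lemma mem_iterM_mul {g : X → List X} {K : ℕ} (hK : ∀ a b : X, a ∈ iterM g K [b]) {j : ℕ}
    (hj : 0 < j) (a b : X) : a ∈ iterM g (K * j) [b] := by
  induction j, hj using Nat.le_induction with
  | base => simpa using hK a b
  | succ j _ ih =>
    rw [Nat.mul_succ, Nat.add_comm]
    exact mem_iterM_add (hK a a) ih

lemma Primitive.powM {g : X → List X} (hg : Primitive g) {k : ℕ} (hk : 0 < k) :
    Primitive (powM g k) := by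
  obtain ⟨K, hK, hall⟩ := hg
  refine ⟨K, hK, fun a b => ?_⟩
  rw [iterM_powM, Nat.mul_comm]
  exact mem_iterM_mul hall hk a b

lemma iterM_infix_of_mem (g : X → List X) (m : ℕ) {a : X} {w : List X} (ha : a ∈ w) :
    iterM g m [a] <:+: iterM g m w := by
  obtain ⟨A, B, rfl⟩ := List.append_of_mem ha
  rw [List.append_cons, iterM_append, iterM_append]
  exact ⟨iterM g m A, iterM g m B, rfl⟩

lemma IsPrefI.isFactorI_of_infix {s : ℕ → X} {v w : List X} (hw : IsPrefI w s) (hvw : v <:+: w) :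
    IsFactorI v s := by
  obtain ⟨A, B, rfl⟩ := hvw
  refine ⟨A.length, fun i hi => ?_⟩
  rw [← hw (A.length + i) (by rw [List.length_append, List.length_append]; omega)]
  simp [List.getElem_append_right, List.getElem_append_left hi]

lemma IsOmega.isFactorI_iterM {h : X → List X} {y a : X} {s : ℕ → X} (hs : IsOmega h y s)
    {K : ℕ} (ha : a ∈ iterM h K [y]) (m : ℕ) : IsFactorI (iterM h m [a]) s := by
  refine (hs.2 (m + K)).isFactorI_of_infix ?_
  rw [iterM_add]
  exact iterM_infix_of_mem h m ha

lemma IsPeriodicWord.periodic {s : ℕ → X} {u : List X} (hu : IsPeriodicWord s u) :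
    Function.Periodic s u.length := fun i => by
  have hpos := List.length_pos_iff.2 hu.1
  rw [hu.2 _ (Nat.mod_lt _ hpos), hu.2 _ (Nat.mod_lt _ hpos)]
  simp

lemma Function.Periodic.of_isFactorI_of_isPrefI {s s' : ℕ → X} {p : ℕ} (hs' : Periodic s' p)
    (hlong : ∀ N, ∃ w : List X, N ≤ w.length ∧ IsPrefI w s ∧ IsFactorI w s') :
    Periodic s p := fun t => by
  obtain ⟨w, hN, hpre, j, hfac⟩ := hlong (t + p + 1)
  rw [← hpre t (by omega), ← hpre (t + p) (by omega), hfac t (by omega), hfac (t + p) (by omega),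
    ← Nat.add_assoc, hs']

lemma List.getElem_flatten_replicate (v : List X) (j i : ℕ)
    (hi : i < (List.replicate j v).flatten.length) :
    (List.replicate j v).flatten[i] =
      v[i % v.length]'(Nat.mod_lt _ (List.length_pos_iff.2 (by rintro rfl; simp at hi))) := by
  induction j generalizing i with
  | zero => simp at hi
  | succ j ih =>
    simp only [List.replicate_succ, List.flatten_cons, List.getElem_append]
    split_ifs with h
    · simp [Nat.mod_eq_of_lt h]
    · simp [ih, Nat.mod_eq_sub_mod (Nat.le_of_not_lt h)]

lemma IsPeriodicWord.of_flatten_replicate {s : ℕ → X} {v : List X} {j : ℕ}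
    (hv : IsPeriodicWord s (List.replicate j v).flatten) : IsPeriodicWord s v := by
  have hne : v ≠ [] := by rintro rfl; exact hv.1 (by simp)
  refine ⟨hne, fun i hi => ?_⟩
  rw [hv.2 i (Nat.mod_lt _ (List.length_pos_iff.2 hv.1)), List.getElem_flatten_replicate]
  congr 1
  exact Nat.mod_mod_of_dvd i ⟨j, by simp [Nat.mul_comm]⟩

lemma isPeriodicWord_map_range {s : ℕ → X} {p : ℕ} (hs : Function.Periodic s p) (hp : 0 < p) :
    IsPeriodicWord s ((List.range p).map s) := by
  refine ⟨List.ne_nil_of_length_pos (by simpa using hp), fun i h => ?_⟩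
  simp [hs.map_mod_nat]

lemma exists_primitiveWord_isPeriodicWord {s : ℕ → X} {p : ℕ} (hs : Function.Periodic s p)
    (hp : 0 < p) : ∃ u, PrimitiveWord u ∧ IsPeriodicWord s u := by
  induction p using Nat.strong_induction_on with
  | _ p ih =>
    have hu := isPeriodicWord_map_range hs hp
    by_cases hprim : PrimitiveWord ((List.range p).map s)
    · exact ⟨_, hprim, hu⟩
    obtain ⟨v, j, -, hlt, hvj⟩ := not_not.1 (not_and.1 hprim hu.1)
    have hv : IsPeriodicWord s v := (hvj ▸ hu).of_flatten_replicate
    rw [List.length_map, List.length_range] at hlt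
    exact ih _ hlt hv.periodic (List.length_pos_iff.2 hv.1)

theorem looping_omega_is_periodic_general {X : Type*}
    (g : X → List X) (hg : Primitive g) (hloop : Looping g)
    (x : X) (s : ℕ → X) (hs : IsOmega g x s) :
    ∃ u : List X, PrimitiveWord u ∧ IsPeriodicWord s u := by
  obtain ⟨k, hk, y, v, s', hs', hv⟩ := hloop
  obtain ⟨K, -, hK⟩ := hg.powM hk
  refine exists_primitiveWord_isPeriodicWord ?_ (List.length_pos_iff.2 hv.1)
  refine hv.periodic.of_isFactorI_of_isPrefI fun N => ?_
  obtain ⟨m, hm⟩ := Filter.eventually_atTop.1 (hs.1.2.eventually_ge_atTop N)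
  refine ⟨iterM g (k * m) [x], hm _ (Nat.le_mul_of_pos_left m hk), hs.2 _, ?_⟩
  rw [← iterM_powM]
  exact hs'.isFactorI_iterM (hK x y) m

/-- If `g` is a primitive looping morphism on an alphabet with
`n ≥ 2` letters and `g^ω(x)` exists, then `g^ω(x) = u^ω` for some primitive word `u`. -/
theorem looping_omega_is_periodic {X : Type*} [Fintype X]
    (n : ℕ) (hn : n = Fintype.card X) (hn2 : 2 ≤ n)
    (g : X → List X) (hg : Primitive g) (hloop : Looping g)
    (x : X) (s : ℕ → X) (hs : IsOmega g x s) :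
    ∃ u : List X, PrimitiveWord u ∧ IsPeriodicWord s u :=
  looping_omega_is_periodic_general g hg hloop x s hs
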